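/- Let k = 2ℓ+1 be odd and F the k-dimensional Lyness map. Then W(x)·W(F(x)) = V_1(x) for all x in the positive orthant, where W(x) = (Π_{j=0}^{ℓ}(x_{2j+1}+1))/(Π_{j=1}^{ℓ} x_{2j}) and V_1 is the standard first integral (a + Σ x_i)·Π(x_i+1)/Π x_i. -/

import Mathlib

/-!
Under `F` every coordinate moves one place down, so the numerator of `W (F x)` consists of the
factors `x_{2j} + 1` (1-based) that are missing from the numerator of `W x`, together with
`F(x)_k + 1 = (a + Σ x_i) / x_1`, while its denominator consists of the odd-indexed coordinates
`x_3, …, x_k` missing from the denominator of `W x`. Hence `W x · W (F x)` has every `x_i + 1`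
once in the numerator, every `x_i` once in the denominator, and the extra factor `a + Σ x_i`.
-/

theorem Fin.prod_univ_two_mul_add_one_eq_prod_even_mul_prod_odd {M : Type*} [CommMonoid M]
    (l : ℕ) (f : Fin (2 * l + 1) → M) :
    ∏ i, f i =
      (∏ j : Fin (l + 1), f ⟨2 * j, by omega⟩) * ∏ j : Fin l, f ⟨2 * j + 1, by omega⟩ := by
  let e : Fin (l + 1) ⊕ Fin l → Fin (2 * l + 1) :=
    Sum.elim (fun j => ⟨2 * j, by omega⟩) (fun j => ⟨2 * j + 1, by omega⟩)
  have he : e.Bijective := by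
    refine ⟨?_, fun i => ?_⟩
    · rintro (i | i) (j | j) h <;>
        simp only [e, Sum.elim_inl, Sum.elim_inr, Fin.ext_iff, Sum.inl.injEq, Sum.inr.injEq,
          reduceCtorEq] at h ⊢ <;> omega
    · rcases Nat.even_or_odd' i with ⟨j, hj | hj⟩
      · exact ⟨.inl ⟨j, by omega⟩, Fin.ext hj.symm⟩
      · exact ⟨.inr ⟨j, by omega⟩, Fin.ext hj.symm⟩
  rw [← Fintype.prod_bijective e he (f ∘ e) f fun _ => rfl, Fintype.prod_sum_type]
  rfl

noncomputable section

namespace Lyness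

variable {n l : ℕ} (a : ℝ)

def map (x : Fin (n + 1) → ℝ) (i : Fin (n + 1)) : ℝ :=
  if h : (i : ℕ) + 1 < n + 1 then x ⟨i + 1, h⟩ else (a + ∑ j, x j - x 0) / x 0

def V1 (x : Fin (n + 1) → ℝ) : ℝ :=
  (a + ∑ j, x j) * (∏ j, (x j + 1)) / ∏ j, x j

-- Indices are 0-based: `x ⟨2 * j, _⟩` is the paper's `x_{2j+1}`.
def W (x : Fin (2 * l + 1) → ℝ) : ℝ :=
  (∏ j : Fin (l + 1), (x ⟨2 * j, by omega⟩ + 1)) / ∏ j : Fin l, x ⟨2 * j + 1, by omega⟩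

variable {a}

theorem map_of_lt (x : Fin (n + 1) → ℝ) {i : ℕ} (h : i + 1 < n + 1) :
    map a x ⟨i, by omega⟩ = x ⟨i + 1, h⟩ :=
  dif_pos h

theorem map_last_add_one (x : Fin (n + 1) → ℝ) (hx : x 0 ≠ 0) :
    map a x (Fin.last n) + 1 = (a + ∑ j, x j) / x 0 := by
  rw [map, dif_neg (by simp)]
  field_simp
  ring

theorem W_map (x : Fin (2 * l + 1) → ℝ) (hx : x 0 ≠ 0) :
    W (map a x) = (∏ j : Fin l, (x ⟨2 * j + 1, by omega⟩ + 1)) * ((a + ∑ j, x j) / x 0) /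
      ∏ j : Fin l, x ⟨2 * j + 2, by omega⟩ := by
  rw [W, Fin.prod_univ_castSucc]
  congr 2
  · exact Finset.prod_congr rfl fun j _ => congrArg (· + 1) (map_of_lt x (i := 2 * j) (by omega))
  · exact map_last_add_one x hx
  · exact funext fun j => map_of_lt x _

theorem W_mul_W_map (x : Fin (2 * l + 1) → ℝ) (hx : ∀ i, x i ≠ 0) :
    W x * W (map a x) = V1 a x := by
  have heven : ∏ j : Fin (l + 1), x ⟨2 * j, by omega⟩ =
      x 0 * ∏ j : Fin l, x ⟨2 * j + 2, by omega⟩ :=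
    Fin.prod_univ_succ _
  rw [W_map x (hx 0), V1, W, Fin.prod_univ_two_mul_add_one_eq_prod_even_mul_prod_odd l x, heven,
    Fin.prod_univ_two_mul_add_one_eq_prod_even_mul_prod_odd l (fun i => x i + 1)]
  have hodd_ne : ∏ j : Fin l, x ⟨2 * j + 1, by omega⟩ ≠ 0 :=
    Finset.prod_ne_zero_iff.2 fun _ _ => hx _
  have heven_ne : ∏ j : Fin l, x ⟨2 * j + 2, by omega⟩ ≠ 0 :=
    Finset.prod_ne_zero_iff.2 fun _ _ => hx _
  field_simp

end Lyness

end

/-- for odd `k = 2ℓ+1`, `W(x)·W(F(x)) = V₁(x)`. -/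
theorem lyness_W_mul_WF_eq_V1 (l : ℕ) (a : ℝ)
    (F : (Fin (2 * l + 1) → ℝ) → (Fin (2 * l + 1) → ℝ))
    (hF : ∀ x : Fin (2 * l + 1) → ℝ, ∀ i : Fin (2 * l + 1),
      F x i = if h : (i : ℕ) + 1 < 2 * l + 1 then x ⟨(i : ℕ) + 1, h⟩
              else (a + (∑ j, x j) - x ⟨0, by omega⟩) / x ⟨0, by omega⟩)
    (W : (Fin (2 * l + 1) → ℝ) → ℝ)
    (hW : ∀ x : Fin (2 * l + 1) → ℝ, W x =
      (∏ j : Fin (l + 1), (x ⟨2 * (j : ℕ), by have := j.isLt; omega⟩ + 1)) /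
        ∏ j : Fin l, x ⟨2 * (j : ℕ) + 1, by have := j.isLt; omega⟩)
    (V1 : (Fin (2 * l + 1) → ℝ) → ℝ)
    (hV1 : ∀ x : Fin (2 * l + 1) → ℝ,
      V1 x = (a + ∑ j, x j) * (∏ j, (x j + 1)) / ∏ j, x j)
    (x : Fin (2 * l + 1) → ℝ) (hx : ∀ i, 0 < x i) :
    W x * W (F x) = V1 x := by
  obtain rfl : F = Lyness.map a := funext fun y => funext (hF y)
  obtain rfl : W = Lyness.W := funext hW
  obtain rfl : V1 = Lyness.V1 a := funext hV1
  exact Lyness.W_mul_W_map x fun i => (hx i).ne'
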